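/- arXiv:1512.06500 — 3 statements merged into one kernel-verified Lean document; each statement's English description precedes it below -/
import Mathlib

section
/- Let A be a d×d real symmetric positive semidefinite matrix and B a d×d real symmetric positive definite matrix, and let X ∈ ℝ^{d×t} have rank t. Then tr(X^T A X (X^T B X)^{-1}) ≥ Σ_{i=1}^t λ_{d−t+i}(B^{-1}A), where λ_1 ≥ ... ≥ λ_d are the eigenvalues of B^{-1}A in decreasing order. -/
open Matrix Polynomial
open scoped MatrixOrder ComplexOrder
open Unitary

/-!
Writing `B = S²` with `S = √B`, the generalized eigenvalue problem becomes the ordinary one for the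
symmetric matrix `M = S⁻¹ A S⁻¹`, which has the same characteristic polynomial as `B⁻¹ A`, and with
`Y = S X` the trace equals `tr (M P)` for the orthogonal projection `P = Y (Yᵀ Y)⁻¹ Yᵀ` of rank
`t`. In an eigenbasis of `M` this is `∑ μᵢ wᵢ` with weights `wᵢ = (Uᵀ P U)ᵢᵢ ∈ [0, 1]` summing
to `t`, and such a weighted sum is at least the sum of the `t` smallest eigenvalues: for the
threshold `τ = λ_{d-t+1}` both are compared with `τ t + ∑ᵢ min (μᵢ - τ) 0`.
-/

section Threshold

variable {ι : Type*} [Fintype ι]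

open Finset

lemma sum_eq_mul_card_add_sum_min_sub_zero {f : ι → ℝ} {s : Finset ι} {τ : ℝ}
    (hs : ∀ i ∈ s, f i ≤ τ) (hsc : ∀ i ∉ s, τ ≤ f i) :
    ∑ i ∈ s, f i = τ * #s + ∑ i, min (f i - τ) 0 := by
  classical
  rw [← sum_add_sum_compl s, sum_congr rfl fun i hi => min_eq_left (sub_nonpos.mpr (hs i hi)),
    sum_eq_zero fun i hi => min_eq_right (sub_nonneg.mpr (hsc i (mem_compl.mp hi))),
    sum_sub_distrib, sum_const, nsmul_eq_mul]
  ring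

lemma mul_sum_add_sum_min_sub_zero_le_sum_mul (f : ι → ℝ) {w : ι → ℝ} (τ : ℝ)
    (hw : ∀ i, w i ∈ Set.Icc 0 1) :
    τ * ∑ i, w i + ∑ i, min (f i - τ) 0 ≤ ∑ i, f i * w i := by
  rw [mul_sum, ← sum_add_distrib]
  refine sum_le_sum fun i _ => ?_
  obtain ⟨hw0, hw1⟩ := hw i
  rcases le_total (f i) τ with h | h
  · rw [min_eq_left (by linarith)]; nlinarith
  · rw [min_eq_right (by linarith)]; nlinarith

lemma sum_le_sum_mul_of_map_univ_eq {f g w : ι → ℝ} {s : Finset ι}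
    (hfg : univ.val.map f = univ.val.map g) (hs : ∀ i ∈ s, ∀ j ∉ s, f i ≤ f j)
    (hw : ∀ i, w i ∈ Set.Icc 0 1) (hws : ∑ i, w i = #s) :
    ∑ i ∈ s, f i ≤ ∑ i, g i * w i := by
  obtain ⟨τ, hτs, hτsc⟩ : ∃ τ, (∀ i ∈ s, f i ≤ τ) ∧ ∀ i ∉ s, τ ≤ f i := by
    rcases s.eq_empty_or_nonempty with rfl | hne
    · obtain ⟨τ, hτ⟩ := (Set.finite_range f).bddBelow
      exact ⟨τ, by simp, fun i _ => hτ (Set.mem_range_self i)⟩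
    · exact ⟨s.sup' hne f, fun i hi => le_sup' f hi,
        fun j hj => sup'_le hne f fun i hi => hs i hi j hj⟩
  have hmin : ∑ i, min (f i - τ) 0 = ∑ i, min (g i - τ) 0 := by
    have h_eq_sum_map (h : ι → ℝ) :
        ∑ i, min (h i - τ) 0 = ((univ.val.map h).map fun x => min (x - τ) 0).sum := by
      rw [Multiset.map_map]; rfl
    rw [h_eq_sum_map f, h_eq_sum_map g, hfg]
  rw [sum_eq_mul_card_add_sum_min_sub_zero hτs hτsc, ← hws, hmin]
  exact mul_sum_add_sum_min_sub_zero_le_sum_mul g τ hw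

end Threshold

lemma Fin.card_filter_sub_le_val {d t : ℕ} (h : t ≤ d) :
    (Finset.univ.filter fun i : Fin d => d - t ≤ (i : ℕ)).card = t := by
  have hsplit := Finset.card_filter_add_card_filter_not (s := Finset.univ)
    fun i : Fin d => (i : ℕ) < d - t
  simp only [Fin.card_filter_val_lt, not_lt, Finset.card_univ, Fintype.card_fin] at hsplit
  omega

namespace Matrix

section StarProjection

variable {R : Type*} [Field R] [StarRing R] {m n : Type*} [Fintype m] [Fintype n]
  [DecidableEq n]

lemma isStarProjection_mul_inv_mul_conjTranspose (Y : Matrix m n R) (hY : IsUnit (Yᴴ * Y).det) :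
    IsStarProjection (Y * (Yᴴ * Y)⁻¹ * Yᴴ) := by
  refine ⟨?_, ?_⟩
  · calc Y * (Yᴴ * Y)⁻¹ * Yᴴ * (Y * (Yᴴ * Y)⁻¹ * Yᴴ)
          = Y * ((Yᴴ * Y)⁻¹ * (Yᴴ * Y)) * (Yᴴ * Y)⁻¹ * Yᴴ := by simp only [Matrix.mul_assoc]
        _ = Y * (Yᴴ * Y)⁻¹ * Yᴴ := by rw [nonsing_inv_mul _ hY, Matrix.mul_one]
  · simp [IsSelfAdjoint, star_eq_conjTranspose, conjTranspose_nonsing_inv, Matrix.mul_assoc]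

lemma trace_mul_inv_mul_conjTranspose (Y : Matrix m n R) (hY : IsUnit (Yᴴ * Y).det) :
    (Y * (Yᴴ * Y)⁻¹ * Yᴴ).trace = Fintype.card n := by
  rw [trace_mul_cycle, mul_nonsing_inv _ hY, trace_one]

lemma trace_conjTranspose_mul_mul_mul_inv (M : Matrix m m R) (Y : Matrix m n R) :
    (Yᴴ * M * Y * (Yᴴ * Y)⁻¹).trace = (M * (Y * (Yᴴ * Y)⁻¹ * Yᴴ)).trace := by
  simp only [Matrix.mul_assoc]
  rw [trace_mul_comm Yᴴ]
  simp only [Matrix.mul_assoc]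

end StarProjection

variable {n : Type*} [Fintype n]

lemma mulVec_injective_of_rank_eq {R : Type*} [Field R] {m : Type*} [Fintype m]
    (X : Matrix m n R) (hX : X.rank = Fintype.card n) : Function.Injective X.mulVec := by
  have h := X.mulVecLin.finrank_range_add_finrank_ker
  rw [← rank, hX, Module.finrank_fintype_fun_eq_card, add_eq_left] at h
  exact LinearMap.ker_eq_bot.mp (Submodule.finrank_eq_zero.mp h)

variable [DecidableEq n]

lemma trace_conjStarAlgAut {R : Type*} [CommRing R] [StarRing R]
    (u : unitary (Matrix n n R)) (A : Matrix n n R) :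
    (conjStarAlgAut R (Matrix n n R) u A).trace = A.trace := by
  rw [conjStarAlgAut_apply, trace_mul_cycle, Unitary.coe_star_mul_self, Matrix.one_mul]

lemma PosDef.exists_isHermitian_mul_self_eq {𝕜 : Type*} [RCLike 𝕜] {B : Matrix n n 𝕜}
    (hB : B.PosDef) : ∃ S : Matrix n n 𝕜, S.IsHermitian ∧ IsUnit S.det ∧ S * S = B := by
  have hSS : CFC.sqrt B * CFC.sqrt B = B := CFC.sqrt_mul_sqrt_self B hB.posSemidef.nonneg
  refine ⟨CFC.sqrt B, (CFC.sqrt_nonneg B).posSemidef.isHermitian, ?_, hSS⟩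
  exact (isUnit_iff_isUnit_det _).mp (isUnit_of_mul_isUnit_left (hSS ▸ hB.isUnit))

lemma IsHermitian.exists_trace_mul_eq_sum_eigenvalues_mul {M P : Matrix n n ℝ}
    (hM : M.IsHermitian) (hP : IsStarProjection P) :
    ∃ w : n → ℝ, (∀ i, w i ∈ Set.Icc 0 1) ∧ ∑ i, w i = P.trace ∧
      (M * P).trace = ∑ i, hM.eigenvalues i * w i := by
  set φ := conjStarAlgAut ℝ (Matrix n n ℝ) (star hM.eigenvectorUnitary)
  have hφP : IsStarProjection (φ P) := hP.map φ
  refine ⟨fun i => φ P i i, fun i => ⟨?_, ?_⟩, ?_, ?_⟩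
  · exact (nonneg_iff_posSemidef.mp hφP.nonneg).diag_nonneg
  · simpa using (nonneg_iff_posSemidef.mp hφP.one_sub.nonneg).diag_nonneg (i := i)
  · exact trace_conjStarAlgAut _ P
  · rw [← trace_conjStarAlgAut (star hM.eigenvectorUnitary) (M * P), map_mul,
      hM.conjStarAlgAut_star_eigenvectorUnitary]
    simp [trace, diagonal_mul, φ]

lemma map_univ_eigenvalues_eq_of_charpoly_eq_prod {M : Matrix n n ℝ} (hM : M.IsHermitian)
    {lam : n → ℝ} (hchar : M.charpoly = ∏ i, (X - C (lam i))) :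
    Finset.univ.val.map lam = Finset.univ.val.map hM.eigenvalues := by
  have hprod : ∏ i, (X - C (lam i)) = ((Finset.univ.val.map lam).map fun a => X - C a).prod := by
    rw [Multiset.map_map]; rfl
  have h := hM.roots_charpoly_eq_eigenvalues
  rw [hchar, hprod, roots_multiset_prod_X_sub_C] at h
  simpa using h

end Matrix

/-- Lower trace bound: for `A` PSD, `B` PD and `X` of full column rank `t`,
`tr(Xᵀ A X (Xᵀ B X)⁻¹) ≥ Σ_{i=1}^t λ_{d−t+i}(B⁻¹A)`, i.e. the sum of the `t`
smallest eigenvalues of `B⁻¹A` (listed in decreasing order by `lam`). -/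
theorem trace_ratio_lower_bound {d t : ℕ} (A B : Matrix (Fin d) (Fin d) ℝ)
    (X : Matrix (Fin d) (Fin t) ℝ)
    (hA : A.PosSemidef) (hB : B.PosDef) (hX : X.rank = t)
    (lam : Fin d → ℝ) (hlam : Antitone lam)
    (hchar : (B⁻¹ * A).charpoly
      = ∏ i : Fin d, (Polynomial.X - Polynomial.C (lam i))) :
    ∑ i ∈ Finset.univ.filter (fun i : Fin d => d - t ≤ (i : ℕ)), lam i
      ≤ (Xᵀ * A * X * (Xᵀ * B * X)⁻¹).trace := by
  rw [← conjTranspose_eq_transpose_of_trivial X]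
  obtain ⟨S, hS, hSu, rfl⟩ := hB.exists_isHermitian_mul_self_eq
  set M := S⁻¹ * A * S⁻¹
  set Y := S * X
  have hM : M.IsHermitian := by
    simpa only [hS.inv.eq] using isHermitian_conjTranspose_mul_mul S⁻¹ hA.isHermitian
  have hMchar : M.charpoly = ∏ i : Fin d, (Polynomial.X - Polynomial.C (lam i)) := by
    rw [← hchar, Matrix.mul_inv_rev, Matrix.mul_assoc, charpoly_mul_comm]
  have hXAX : Xᴴ * A * X = Yᴴ * M * Y := by
    simp only [Y, M, conjTranspose_mul, hS.eq, Matrix.mul_assoc,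
      mul_nonsing_inv_cancel_left _ _ hSu, nonsing_inv_mul_cancel_left _ _ hSu]
  have hXBX : Xᴴ * (S * S) * X = Yᴴ * Y := by
    simp only [Y, conjTranspose_mul, hS.eq, Matrix.mul_assoc]
  have hYY : IsUnit (Yᴴ * Y).det := by
    rw [← hXBX, ← isUnit_iff_isUnit_det]
    exact (hB.conjTranspose_mul_mul_same (mulVec_injective_of_rank_eq X (by simpa))).isUnit
  obtain ⟨w, hw, hwsum, htrace⟩ := hM.exists_trace_mul_eq_sum_eigenvalues_mul
    (isStarProjection_mul_inv_mul_conjTranspose Y hYY)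
  rw [hXAX, hXBX, trace_conjTranspose_mul_mul_mul_inv, htrace]
  refine sum_le_sum_mul_of_map_univ_eq (map_univ_eigenvalues_eq_of_charpoly_eq_prod hM hMchar)
    (fun i hi j hj => hlam ?_) hw ?_
  · simp only [Finset.mem_filter, Finset.mem_univ, true_and, not_le] at hi hj
    exact Fin.le_def.mpr (by omega)
  · have htd : t ≤ d := by simpa [hX] using X.rank_le_card_height
    rw [hwsum, trace_mul_inv_mul_conjTranspose Y hYY, Fintype.card_fin,
      Fin.card_filter_sub_le_val htd]
end

section
/- Let V, Ṽ ∈ ℝ^{d×t} have orthonormal columns, and let x, y ∈ ℝ^d with ‖x‖₂ = ‖y‖₂ = 1. Define d₁ = ‖V^T(x−y)‖₂, d₂ = ‖Ṽ^T(x−y)‖₂, c = ‖V^T Ṽ‖₂, s = ‖(I − V V^T) Ṽ‖₂, and assume c ≠ 0. Then (d₂ − 2s)/c ≤ d₁ ≤ d₂·c + 2s. -/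
/-!
Put `z = x - y`, so `‖z‖ ≤ 2`. Splitting `Vᵀ = (VᵀW) Wᵀ + ((1 - W Wᵀ) V)ᵀ` gives
`d₁ ≤ c d₂ + 2 ‖(1 - W Wᵀ) V‖`, and exchanging the roles of `V` and `W` gives `d₂ ≤ c d₁ + 2 s`,
which is the lower bound. The two sine terms coincide: for the square matrix `M = VᵀW` one has
`‖(1 - W Wᵀ) V‖² = ‖1 - M Mᵀ‖` and `‖(1 - V Vᵀ) W‖² = ‖1 - Mᵀ M‖`, and these self-adjoint matrices
have equal norms because `M Mᵀ` and `Mᵀ M` have the same spectrum.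
-/

open Matrix
open scoped Matrix.Norms.L2Operator

/-- The Euclidean (2-)norm of a vector indexed by `Fin m`. -/
noncomputable def vecEnorm {m : ℕ} (v : Fin m → ℝ) : ℝ :=
  ‖(WithLp.equiv 2 (Fin m → ℝ)).symm v‖

section vecEnorm

variable {m n : ℕ}

theorem vecEnorm_nonneg (v : Fin m → ℝ) : 0 ≤ vecEnorm v := norm_nonneg _

theorem vecEnorm_add_le (u v : Fin m → ℝ) : vecEnorm (u + v) ≤ vecEnorm u + vecEnorm v :=
  norm_add_le (WithLp.toLp 2 u) (WithLp.toLp 2 v)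

theorem vecEnorm_sub_le (u v : Fin m → ℝ) : vecEnorm (u - v) ≤ vecEnorm u + vecEnorm v :=
  norm_sub_le (WithLp.toLp 2 u) (WithLp.toLp 2 v)

theorem vecEnorm_mulVec_le (A : Matrix (Fin m) (Fin n) ℝ) (v : Fin n → ℝ) :
    vecEnorm (A *ᵥ v) ≤ ‖A‖ * vecEnorm v :=
  l2_opNorm_mulVec A (WithLp.toLp 2 v)

end vecEnorm

namespace Matrix

variable {m n : Type*} [Fintype m] [Fintype n] [DecidableEq m] [DecidableEq n]

theorem spectrum_mul_comm {K : Type*} [Field K] (A B : Matrix n n K) :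
    spectrum K (A * B) = spectrum K (B * A) := by
  ext r
  rcases eq_or_ne r 0 with rfl | hr
  · simp only [spectrum.zero_mem_iff, isUnit_iff_isUnit_det, det_mul, mul_comm]
  · simpa [hr] using congrArg (r ∈ ·) (spectrum.nonzero_mul_comm A B)

theorem l2_opNorm_transpose (A : Matrix m n ℝ) : ‖Aᵀ‖ = ‖A‖ := by
  rw [← conjTranspose_eq_transpose_of_trivial, l2_opNorm_conjTranspose]

theorem l2_opNorm_one_sub_mul_transpose_comm (M : Matrix n n ℝ) :
    ‖1 - M * Mᵀ‖ = ‖1 - Mᵀ * M‖ := by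
  cases isEmpty_or_nonempty n
  · rw [Subsingleton.elim (1 - M * Mᵀ) (1 - Mᵀ * M)]
  have hσ : spectrum ℝ (1 - M * Mᵀ) = spectrum ℝ (1 - Mᵀ * M) := by
    rw [← map_one (algebraMap ℝ (Matrix n n ℝ)), ← spectrum.singleton_sub_eq,
      ← spectrum.singleton_sub_eq, spectrum_mul_comm]
  have hsa : ∀ A : Matrix n n ℝ, IsSelfAdjoint (1 - Aᵀ * A) := fun A => by
    have := (IsSelfAdjoint.one (Matrix n n ℝ)).sub (IsSelfAdjoint.star_mul_self A)
    rwa [star_eq_conjTranspose, conjTranspose_eq_transpose_of_trivial] at this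
  refine (IsometricContinuousFunctionalCalculus.isGreatest_norm_spectrum (𝕜 := ℝ) _ ?_).unique ?_
  · simpa using hsa Mᵀ
  · rw [hσ]
    exact IsometricContinuousFunctionalCalculus.isGreatest_norm_spectrum _ (hsa M)

theorem transpose_mul_self_one_sub_mul_transpose_mul {V W : Matrix m n ℝ}
    (hV : Vᵀ * V = 1) (hW : Wᵀ * W = 1) :
    ((1 - W * Wᵀ) * V)ᵀ * ((1 - W * Wᵀ) * V) = 1 - (Vᵀ * W) * (Vᵀ * W)ᵀ := by
  have hW' : ∀ X : Matrix n n ℝ, Wᵀ * (W * X) = X := fun X => by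
    rw [← Matrix.mul_assoc, hW, Matrix.one_mul]
  simp only [transpose_mul, transpose_sub, transpose_transpose, Matrix.mul_sub, Matrix.sub_mul,
    Matrix.one_mul, Matrix.mul_assoc, hW', hV]
  abel

theorem l2_opNorm_one_sub_mul_transpose_mul_comm {V W : Matrix m n ℝ}
    (hV : Vᵀ * V = 1) (hW : Wᵀ * W = 1) :
    ‖(1 - W * Wᵀ) * V‖ = ‖(1 - V * Vᵀ) * W‖ := by
  have hsq : ∀ {A B : Matrix m n ℝ}, Aᵀ * A = 1 → Bᵀ * B = 1 →
      ‖(1 - B * Bᵀ) * A‖ * ‖(1 - B * Bᵀ) * A‖ = ‖1 - (Aᵀ * B) * (Aᵀ * B)ᵀ‖ := fun hA hB => by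
    rw [← l2_opNorm_conjTranspose_mul_self, conjTranspose_eq_transpose_of_trivial,
      transpose_mul_self_one_sub_mul_transpose_mul hA hB]
  rw [← mul_self_inj (norm_nonneg _) (norm_nonneg _), hsq hV hW, hsq hW hV,
    l2_opNorm_one_sub_mul_transpose_comm, transpose_mul, transpose_mul, transpose_transpose,
    transpose_transpose]

end Matrix

theorem vecEnorm_transpose_mulVec_le {d t : ℕ} (V W : Matrix (Fin d) (Fin t) ℝ)
    (z : Fin d → ℝ) :
    vecEnorm (Vᵀ *ᵥ z) ≤ ‖Vᵀ * W‖ * vecEnorm (Wᵀ *ᵥ z) + ‖(1 - W * Wᵀ) * V‖ * vecEnorm z := by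
  have hsplit : Vᵀ *ᵥ z = (Vᵀ * W) *ᵥ (Wᵀ *ᵥ z) + ((1 - W * Wᵀ) * V)ᵀ *ᵥ z := by
    rw [mulVec_mulVec, ← add_mulVec, transpose_mul, transpose_sub, transpose_one,
      transpose_mul, transpose_transpose, Matrix.mul_sub, Matrix.mul_one, Matrix.mul_assoc,
      add_sub_cancel]
  calc vecEnorm (Vᵀ *ᵥ z)
      ≤ vecEnorm ((Vᵀ * W) *ᵥ (Wᵀ *ᵥ z)) + vecEnorm (((1 - W * Wᵀ) * V)ᵀ *ᵥ z) := by
        rw [hsplit]; exact vecEnorm_add_le _ _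
    _ ≤ ‖Vᵀ * W‖ * vecEnorm (Wᵀ *ᵥ z) + ‖(1 - W * Wᵀ) * V‖ * vecEnorm z := by
        rw [← l2_opNorm_transpose ((1 - W * Wᵀ) * V)]
        exact add_le_add (vecEnorm_mulVec_le _ _) (vecEnorm_mulVec_le _ _)

theorem distance_two_sided_bound_general {d t : ℕ} (V W : Matrix (Fin d) (Fin t) ℝ)
    (hV : Vᵀ * V = 1) (hW : Wᵀ * W = 1)
    (x y : Fin d → ℝ) (hx : vecEnorm x = 1) (hy : vecEnorm y = 1) :
    (vecEnorm (Wᵀ.mulVec (x - y)) - 2 * ‖(1 - V * Vᵀ) * W‖) / ‖Vᵀ * W‖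
        ≤ vecEnorm (Vᵀ.mulVec (x - y)) ∧
      vecEnorm (Vᵀ.mulVec (x - y))
        ≤ vecEnorm (Wᵀ.mulVec (x - y)) * ‖Vᵀ * W‖ + 2 * ‖(1 - V * Vᵀ) * W‖ := by
  have hxy : vecEnorm (x - y) ≤ 2 := by linarith [vecEnorm_sub_le x y]
  have hs : ‖(1 - V * Vᵀ) * W‖ * vecEnorm (x - y) ≤ ‖(1 - V * Vᵀ) * W‖ * 2 :=
    mul_le_mul_of_nonneg_left hxy (norm_nonneg _)
  have hVW := vecEnorm_transpose_mulVec_le V W (x - y)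
  have hWV := vecEnorm_transpose_mulVec_le W V (x - y)
  rw [l2_opNorm_one_sub_mul_transpose_mul_comm hV hW] at hVW
  rw [← l2_opNorm_transpose, transpose_mul, transpose_transpose] at hWV
  constructor
  · exact div_le_of_le_mul₀ (norm_nonneg _) (vecEnorm_nonneg _) (by linarith)
  · linarith

/-- For orthonormal `V, Ṽ`, unit vectors `x, y`, `c = ‖VᵀṼ‖ ≠ 0` and
`s = ‖(I−VVᵀ)Ṽ‖`: `(d₂ − 2s)/c ≤ d₁ ≤ d₂·c + 2s`. -/
theorem distance_two_sided_bound {d t : ℕ} (V W : Matrix (Fin d) (Fin t) ℝ)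
    (hV : Vᵀ * V = 1) (hW : Wᵀ * W = 1)
    (x y : Fin d → ℝ) (hx : vecEnorm x = 1) (hy : vecEnorm y = 1)
    (hc : ‖Vᵀ * W‖ ≠ 0) :
    (vecEnorm (Wᵀ.mulVec (x - y)) - 2 * ‖(1 - V * Vᵀ) * W‖) / ‖Vᵀ * W‖
        ≤ vecEnorm (Vᵀ.mulVec (x - y)) ∧
      vecEnorm (Vᵀ.mulVec (x - y))
        ≤ vecEnorm (Wᵀ.mulVec (x - y)) * ‖Vᵀ * W‖ + 2 * ‖(1 - V * Vᵀ) * W‖ :=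
  distance_two_sided_bound_general V W hV hW x y hx hy
end

section
/- Let S_W, S_B be real symmetric d×d matrices and t ≤ d. Define ρ = max over V ∈ ℝ^{d×t} with V^T V = I of tr((V^T exp(S_W) V)^{-1} (V^T exp(S_B) V)). Then ρ ≤ Σ_{i=1}^t exp(μ_i − ν_d), where μ_1 ≥ ... ≥ μ_d are the eigenvalues of S_B and ν_1 ≥ ... ≥ ν_d are the eigenvalues of S_W. -/
/-!
Since `ν_d` is the smallest eigenvalue of `S_W`, `exp S_W ≥ e^{ν_d} I` in the Loewner order;
compressing by `V` gives `Vᵀ exp(S_W) V ≥ e^{ν_d} I`, hence `(Vᵀ exp(S_W) V)⁻¹ ≤ e^{-ν_d} I` and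
the criterion is at most `e^{-ν_d} tr(Vᵀ exp(S_B) V)`. That trace is bounded by Ky Fan's
principle: with `exp S_B = U diag(e^μ) Uᵀ` it equals `∑ e^{μ_i} p_i`, where the `p_i` are the
diagonal entries of the orthogonal projection `(UᵀV)(UᵀV)ᵀ`. They lie in `[0, 1]` and sum to `t`,
so the weighted sum is at most the sum of the `t` largest weights.
-/

open Matrix
open scoped MatrixOrder

lemma Finset.sum_mul_le_sum_of_threshold {ι : Type*} [Fintype ι] (s : Finset ι) {w g : ι → ℝ}
    (τ : ℝ) (hs : ∀ i ∈ s, τ ≤ w i) (hsc : ∀ i ∉ s, w i ≤ τ) (hg : ∀ i, g i ∈ Set.Icc 0 1)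
    (hgs : ∑ i, g i = s.card) :
    ∑ i, w i * g i ≤ ∑ i ∈ s, w i := by
  classical
  calc ∑ i, w i * g i
      = ∑ i, (w i * g i - if i ∈ s then w i else 0) + ∑ i ∈ s, w i := by
        rw [Finset.sum_sub_distrib, Finset.sum_ite_mem, Finset.univ_inter]; ring
    _ ≤ ∑ i, τ * (g i - if i ∈ s then 1 else 0) + ∑ i ∈ s, w i := by
        gcongr with i
        obtain ⟨hg0, hg1⟩ := hg i
        split_ifs with hi
        · nlinarith [hs i hi]
        · nlinarith [hsc i hi]
    _ = ∑ i ∈ s, w i := by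
        rw [← Finset.mul_sum, Finset.sum_sub_distrib, Finset.sum_ite_mem, Finset.univ_inter, hgs]
        simp

lemma Fin.sum_mul_le_sum_castLE_of_antitone {d t : ℕ} (hd : 0 < d) (ht : t ≤ d)
    {w g : Fin d → ℝ} (hw : Antitone w) (hg : ∀ i, g i ∈ Set.Icc 0 1) (hgs : ∑ i, g i = t) :
    ∑ i, w i * g i ≤ ∑ j : Fin t, w (Fin.castLE ht j) := by
  set s := Finset.univ.map (Fin.castLEEmb ht)
  have hmem (i : Fin d) : i ∈ s ↔ (i : ℕ) < t := by
    simp only [s, Finset.mem_map, Finset.mem_univ, true_and]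
    exact ⟨fun ⟨j, hj⟩ => hj ▸ j.isLt, fun hi => ⟨⟨i, hi⟩, rfl⟩⟩
  refine (Finset.sum_mul_le_sum_of_threshold s (w ⟨t - 1, by omega⟩) (fun i hi => hw ?_)
    (fun i hi => hw ?_) hg (by simpa [s] using hgs)).trans_eq (Finset.sum_map _ _ _)
  · rw [hmem] at hi; exact Fin.mk_le_mk.mpr (by omega)
  · rw [hmem] at hi; exact Fin.mk_le_mk.mpr (by omega)

namespace Matrix

section KyFan

lemma diag_mul_transpose_mem_Icc {ι κ : Type*} [Fintype ι] [Fintype κ] [DecidableEq κ]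
    {N : Matrix ι κ ℝ} (hN : Nᵀ * N = 1) (i : ι) : (N * Nᵀ) i i ∈ Set.Icc 0 1 := by
  set P := N * Nᵀ
  have hP_symm : Pᵀ = P := by rw [transpose_mul, transpose_transpose]
  have hP_idem : P * P = P := by
    simp only [P, Matrix.mul_assoc, ← Matrix.mul_assoc Nᵀ, hN, Matrix.one_mul]
  have hP_sq : P i i ^ 2 ≤ P i i :=
    calc P i i ^ 2 ≤ ∑ j, P i j ^ 2 :=
          Finset.single_le_sum (f := fun j => P i j ^ 2) (fun j _ => sq_nonneg _)
            (Finset.mem_univ i)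
      _ = (P * P) i i := by
          simp only [mul_apply, sq]
          congr! 2 with j
          rw [← transpose_apply P i j, hP_symm]
      _ = P i i := by rw [hP_idem]
  exact ⟨Finset.sum_nonneg fun k _ => mul_self_nonneg (N i k), by nlinarith⟩

lemma trace_transpose_mul_diagonal_mul {ι κ : Type*} [Fintype ι] [DecidableEq ι] [Fintype κ]
    (N : Matrix ι κ ℝ) (w : ι → ℝ) :
    (Nᵀ * diagonal w * N).trace = ∑ i, w i * (N * Nᵀ) i i := by
  rw [trace_mul_comm, ← Matrix.mul_assoc]
  simp [trace, mul_diagonal, mul_comm]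

lemma trace_transpose_mul_diagonal_mul_le {d t : ℕ} (hd : 0 < d) (ht : t ≤ d)
    {w : Fin d → ℝ} (σ : Equiv.Perm (Fin d)) (hw : Antitone (w ∘ σ))
    {N : Matrix (Fin d) (Fin t) ℝ} (hN : Nᵀ * N = 1) :
    (Nᵀ * diagonal w * N).trace ≤ ∑ j : Fin t, w (σ (Fin.castLE ht j)) := by
  have htrace : ∑ i, (N * Nᵀ) (σ i) (σ i) = t := by
    rw [Equiv.sum_comp σ (fun i => (N * Nᵀ) i i)]
    change (N * Nᵀ).trace = t
    simp [trace_mul_comm N, hN]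
  rw [trace_transpose_mul_diagonal_mul, ← Equiv.sum_comp σ]
  exact Fin.sum_mul_le_sum_castLE_of_antitone hd ht hw
    (fun i => diag_mul_transpose_mem_Icc hN (σ i)) htrace

end KyFan

section Loewner

variable {n : Type*} [Fintype n]

lemma transpose_mul_mul_le_transpose_mul_mul {m : Type*} [Fintype m] {A B : Matrix n n ℝ}
    (hAB : A ≤ B) (V : Matrix n m ℝ) : Vᵀ * A * V ≤ Vᵀ * B * V := by
  rw [le_iff, ← Matrix.sub_mul, ← Matrix.mul_sub, ← conjTranspose_eq_transpose_of_trivial]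
  exact (le_iff.mp hAB).conjTranspose_mul_mul_same V

variable [DecidableEq n]

lemma trace_mul_le_trace_mul_of_le {A B C : Matrix n n ℝ} (hAB : A ≤ B) (hC : 0 ≤ C) :
    (A * C).trace ≤ (B * C).trace := by
  obtain ⟨R, rfl⟩ := CStarAlgebra.nonneg_iff_eq_star_mul_self.mp hC
  have hcycle (X : Matrix n n ℝ) : (X * (star R * R)).trace = (R * X * star R).trace := by
    rw [← mul_assoc, trace_mul_comm, ← mul_assoc]
  have h := (le_iff.mp (star_right_conjugate_le_conjugate hAB R)).trace_nonneg
  rw [trace_sub, sub_nonneg] at h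
  rwa [hcycle, hcycle]

lemma inv_le_smul_one_of_smul_one_le {A : Matrix n n ℝ} {c : ℝ} (hc : 0 < c)
    (hA : c • (1 : Matrix n n ℝ) ≤ A) : A⁻¹ ≤ c⁻¹ • (1 : Matrix n n ℝ) := by
  rw [← Algebra.algebraMap_eq_smul_one] at hA ⊢
  have hA_sa : IsSelfAdjoint A := ((algebraMap_nonneg _ hc.le).trans hA).isSelfAdjoint
  have hspec : ∀ x ∈ spectrum ℝ A, c ≤ x := (algebraMap_le_iff_le_spectrum hA_sa).mp hA
  have hunit : IsUnit A := spectrum.isUnit_of_zero_notMem ℝ fun h0 => (hspec 0 h0).not_gt hc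
  have hinv_cont : ContinuousOn (·⁻¹) (spectrum ℝ A) :=
    continuousOn_inv₀.mono fun x hx => (hc.trans_le (hspec x hx)).ne'
  rw [nonsing_inv_eq_ringInverse, ← cfc_ringInverse_id (R := ℝ) (a := A) hunit hA_sa,
    cfc_le_algebraMap_iff _ _ _ hinv_cont hA_sa]
  exact fun x hx => inv_anti₀ hc (hspec x hx)

lemma trace_inv_mul_le_of_smul_one_le {A B : Matrix n n ℝ} {c : ℝ} (hc : 0 < c)
    (hA : c • (1 : Matrix n n ℝ) ≤ A) (hB : 0 ≤ B) :
    (A⁻¹ * B).trace ≤ c⁻¹ * B.trace := by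
  simpa using trace_mul_le_trace_mul_of_le (inv_le_smul_one_of_smul_one_le hc hA) hB

end Loewner

section Exponential

variable {n : Type*} [Fintype n] [DecidableEq n] {A : Matrix n n ℝ}

open scoped Matrix.Norms.L2Operator in
lemma IsHermitian.exp_eq_cfc (hA : A.IsHermitian) : NormedSpace.exp A = cfc Real.exp A :=
  (CFC.real_exp_eq_normedSpace_exp hA.isSelfAdjoint).symm

lemma IsHermitian.cfc_eq_mul_diagonal_mul (hA : A.IsHermitian) (f : ℝ → ℝ) :
    cfc f A = (hA.eigenvectorUnitary : Matrix n n ℝ) * diagonal (f ∘ hA.eigenvalues) *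
      (hA.eigenvectorUnitary : Matrix n n ℝ)ᵀ := by
  rw [hA.cfc_eq, IsHermitian.cfc, Unitary.conjStarAlgAut_apply, star_eq_conjTranspose,
    conjTranspose_eq_transpose_of_trivial]
  rfl

lemma IsHermitian.exp_nonneg (hA : A.IsHermitian) : 0 ≤ NormedSpace.exp A := by
  rw [hA.exp_eq_cfc]
  exact cfc_nonneg fun x _ => (Real.exp_pos x).le

lemma IsHermitian.smul_one_le_exp (hA : A.IsHermitian) {c : ℝ}
    (hc : ∀ i, c ≤ hA.eigenvalues i) : Real.exp c • (1 : Matrix n n ℝ) ≤ NormedSpace.exp A := by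
  rw [hA.exp_eq_cfc, ← Algebra.algebraMap_eq_smul_one, algebraMap_le_cfc_iff _ _ _,
    hA.spectrum_real_eq_range_eigenvalues]
  rintro - ⟨i, rfl⟩
  exact Real.exp_le_exp.mpr (hc i)

lemma IsHermitian.trace_transpose_mul_cfc_mul_le {d t : ℕ} (hd : 0 < d) (ht : t ≤ d)
    {A : Matrix (Fin d) (Fin d) ℝ} (hA : A.IsHermitian) {f : ℝ → ℝ} (hf : Monotone f)
    (σ : Equiv.Perm (Fin d)) (hσ : Antitone (hA.eigenvalues ∘ σ))
    {V : Matrix (Fin d) (Fin t) ℝ} (hV : Vᵀ * V = 1) :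
    (Vᵀ * cfc f A * V).trace ≤ ∑ j : Fin t, f (hA.eigenvalues (σ (Fin.castLE ht j))) := by
  set U : Matrix (Fin d) (Fin d) ℝ := ↑hA.eigenvectorUnitary
  have hU : U * Uᵀ = 1 := by
    simpa [U, star_eq_conjTranspose] using mem_unitaryGroup_iff.mp hA.eigenvectorUnitary.2
  have hN : (Uᵀ * V)ᵀ * (Uᵀ * V) = 1 := by
    rw [transpose_mul, transpose_transpose, Matrix.mul_assoc, ← Matrix.mul_assoc U, hU,
      Matrix.one_mul, hV]
  have hconj : Vᵀ * cfc f A * V = (Uᵀ * V)ᵀ * diagonal (f ∘ hA.eigenvalues) * (Uᵀ * V) := by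
    rw [hA.cfc_eq_mul_diagonal_mul, transpose_mul, transpose_transpose]
    simp only [U, Matrix.mul_assoc]
  rw [hconj]
  exact trace_transpose_mul_diagonal_mul_le hd ht σ (hf.comp_antitone hσ) hN

end Exponential

end Matrix

/-- The EDA criterion value is at most `Σ_{i=1}^t exp(μ_i − ν_d)`: every orthonormal
`V ∈ ℝ^{d×t}` satisfies
`tr((Vᵀ exp(S_W) V)⁻¹ (Vᵀ exp(S_B) V)) ≤ Σ_{i=1}^t exp(μ_i − ν_d)`,
hence so does the maximum `ρ`. -/
theorem eda_criterion_upper_bound {d t : ℕ} (hd : 0 < d) (ht : t ≤ d)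
    (SW SB : Matrix (Fin d) (Fin d) ℝ)
    (hW : SW.IsHermitian) (hB : SB.IsHermitian)
    (ν μ : Fin d → ℝ) (hν : Antitone ν) (hμ : Antitone μ)
    (hνe : ∃ σ : Equiv.Perm (Fin d), ν = hW.eigenvalues ∘ σ)
    (hμe : ∃ σ : Equiv.Perm (Fin d), μ = hB.eigenvalues ∘ σ)
    (V : Matrix (Fin d) (Fin t) ℝ) (hV : Vᵀ * V = 1) :
    ((Vᵀ * NormedSpace.exp SW * V)⁻¹ * (Vᵀ * NormedSpace.exp SB * V)).trace
      ≤ ∑ i : Fin t,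
          Real.exp (μ (Fin.castLE ht i) - ν ⟨d - 1, Nat.sub_lt hd Nat.one_pos⟩) := by
  obtain ⟨τ, rfl⟩ := hνe
  obtain ⟨σ, rfl⟩ := hμe
  set c := (hW.eigenvalues ∘ τ) ⟨d - 1, Nat.sub_lt hd Nat.one_pos⟩
  have hc : ∀ i, c ≤ hW.eigenvalues i := fun i => by
    simpa [c] using hν (Fin.mk_le_mk.mpr (Nat.le_sub_one_of_lt (τ.symm i).isLt) : τ.symm i ≤ _)
  have hA : Real.exp c • (1 : Matrix (Fin t) (Fin t) ℝ) ≤ Vᵀ * NormedSpace.exp SW * V := by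
    simpa [Matrix.mul_smul, hV] using
      transpose_mul_mul_le_transpose_mul_mul (hW.smul_one_le_exp hc) V
  have hB_nonneg : 0 ≤ Vᵀ * NormedSpace.exp SB * V := by
    simpa using transpose_mul_mul_le_transpose_mul_mul hB.exp_nonneg V
  calc _ ≤ (Real.exp c)⁻¹ * (Vᵀ * NormedSpace.exp SB * V).trace :=
        trace_inv_mul_le_of_smul_one_le (Real.exp_pos c) hA hB_nonneg
    _ ≤ (Real.exp c)⁻¹ * ∑ j : Fin t, Real.exp (hB.eigenvalues (σ (Fin.castLE ht j))) := by
        gcongr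
        rw [hB.exp_eq_cfc]
        exact hB.trace_transpose_mul_cfc_mul_le hd ht Real.exp_monotone σ hμ hV
    _ = _ := by
        simp only [Finset.mul_sum, Real.exp_sub, Function.comp_apply, c]
        congr! 1 with j
        ring
end
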